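/- arXiv:1203.6574 — 4 statements merged into one kernel-verified Lean document; each statement's English description precedes it below -/
import Mathlib

section
/- For a nonnegative random variable X and 0 < θ ≤ 1, X^θ is long-tailed if and only if lim_{x→∞} P(X > x − ξ x^{1−θ})/P(X > x) = 1 for all ξ ∈ ℝ. -/
open MeasureTheory Filter Set ProbabilityTheory Real

/-- The tail probability `P(X > x)` as a real number. -/
noncomputable def tailP {Ω : Type*} [MeasurableSpace Ω] (μ : Measure Ω) (X : Ω → ℝ) (x : ℝ) : ℝ :=
  (μ {ω | x < X ω}).toReal

/-- A nonnegative random variable `X` is long-tailed if `P(X > x) > 0` for all `x ≥ 0` and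
`P(X > x + y) / P(X > x) → 1` as `x → ∞` for all `y > 0`. -/
def LongTailed {Ω : Type*} [MeasurableSpace Ω] (μ : Measure Ω) (X : Ω → ℝ) : Prop :=
  (∀ x ≥ 0, 0 < tailP μ X x) ∧
  ∀ y > 0, Tendsto (fun x => tailP μ X (x + y) / tailP μ X x) atTop (nhds 1)

/-!
Write `Y = X^θ`. Then `P(X > x - ξ x^{1-θ}) = P(Y > (x - ξ x^{1-θ})^θ)`, and a first-order
expansion gives `(x - ξ x^{1-θ})^θ = x^θ - θξ + o(1)`. So the condition on `X` compares the tail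
of `Y` at two points `a, b → ∞` whose difference tends to `-θξ`. Since the tail of `Y` is
antitone, such a ratio is squeezed between `P(Y > b ± r) / P(Y > b)` for a constant `r`, which
tend to `1` when `Y` is long-tailed; conversely, choosing `ξ` very negative makes the shift
`-θξ` exceed any given `y > 0`.
-/

open Topology

section TailP

variable {Ω : Type*} [MeasurableSpace Ω] (μ : Measure Ω)

lemma tailP_nonneg (X : Ω → ℝ) (x : ℝ) : 0 ≤ tailP μ X x := ENNReal.toReal_nonneg

lemma tailP_antitone [IsFiniteMeasure μ] (X : Ω → ℝ) : Antitone (tailP μ X) :=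
  fun _ _ hab => ENNReal.toReal_mono (measure_ne_top μ _)
    (measure_mono fun _ hω => lt_of_le_of_lt hab hω)

lemma tailP_rpow_rpow {X : Ω → ℝ} (hX : ∀ ω, 0 ≤ X ω) {θ : ℝ} (hθ : 0 < θ) {s : ℝ}
    (hs : 0 ≤ s) : tailP μ (fun ω => X ω ^ θ) (s ^ θ) = tailP μ X s := by
  simp only [tailP, Real.rpow_lt_rpow_iff hs (hX _) hθ]

end TailP

section Ratios

variable {G : ℝ → ℝ}

lemma tendsto_sub_div_of_tendsto_add_div {y : ℝ}
    (h : Tendsto (fun u => G (u + y) / G u) atTop (𝓝 1)) :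
    Tendsto (fun u => G (u - y) / G u) atTop (𝓝 1) := by
  have h' := (h.comp (tendsto_atTop_add_const_right atTop (-y) tendsto_id)).inv₀ one_ne_zero
  simpa [Function.comp_def, inv_div, ← sub_eq_add_neg] using h'

lemma Antitone.tendsto_div_of_tendsto_sub (hG : Antitone G) (hG0 : ∀ u, 0 ≤ G u)
    (hlong : ∀ y > 0, Tendsto (fun u => G (u + y) / G u) atTop (𝓝 1))
    {α : Type*} {l : Filter α} {a b : α → ℝ} {c : ℝ} (hb : Tendsto b l atTop)
    (hab : Tendsto (fun i => a i - b i) l (𝓝 c)) :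
    Tendsto (fun i => G (a i) / G (b i)) l (𝓝 1) := by
  set r := |c| + 1
  have hr : 0 < r := by positivity
  have hclose : ∀ᶠ i in l, a i - b i ∈ Ioo (-r) r :=
    hab.eventually (Ioo_mem_nhds (by linarith [neg_abs_le c]) (by linarith [le_abs_self c]))
  refine tendsto_of_tendsto_of_tendsto_of_le_of_le' ((hlong r hr).comp hb)
    ((tendsto_sub_div_of_tendsto_add_div (hlong r hr)).comp hb) ?_ ?_
  · filter_upwards [hclose] with i hi
    exact div_le_div_of_nonneg_right (hG (by linarith [hi.2])) (hG0 _)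
  · filter_upwards [hclose] with i hi
    exact div_le_div_of_nonneg_right (hG (by linarith [hi.1])) (hG0 _)

lemma Antitone.tendsto_add_div_of_tendsto_div (hG : Antitone G) (hG0 : ∀ u, 0 ≤ G u)
    {α : Type*} {l : Filter α} {a b : α → ℝ} {c y : ℝ} (hy : 0 ≤ y) (hyc : y < c)
    (hab : Tendsto (fun i => a i - b i) l (𝓝 c))
    (h : Tendsto (fun i => G (a i) / G (b i)) l (𝓝 1)) :
    Tendsto (fun i => G (b i + y) / G (b i)) l (𝓝 1) := by
  refine tendsto_of_tendsto_of_tendsto_of_le_of_le' h tendsto_const_nhds ?_ ?_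
  · filter_upwards [hab.eventually (eventually_gt_nhds hyc)] with i hi
    exact div_le_div_of_nonneg_right (hG (by linarith)) (hG0 _)
  · exact Eventually.of_forall fun i =>
      div_le_one_of_le₀ (hG (le_add_of_nonneg_right hy)) (hG0 _)

end Ratios

section Expansion

variable {θ : ℝ} (ξ : ℝ)

lemma sub_mul_rpow_one_sub {x : ℝ} (hx : 0 < x) :
    x - ξ * x ^ (1 - θ) = x * (1 - ξ * (x ^ θ)⁻¹) := by
  rw [Real.rpow_sub hx, Real.rpow_one]
  ring

lemma eventually_nonneg_one_sub_mul_inv_rpow (hθ : 0 < θ) :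
    ∀ᶠ x in atTop, 0 ≤ 1 - ξ * (x ^ θ)⁻¹ := by
  have h : Tendsto (fun x : ℝ => 1 - ξ * (x ^ θ)⁻¹) atTop (𝓝 1) := by
    simpa using tendsto_const_nhds.sub
      ((tendsto_inv_atTop_zero.comp (tendsto_rpow_atTop hθ)).const_mul ξ)
  exact h.eventually (eventually_ge_nhds zero_lt_one)

lemma eventually_nonneg_sub_mul_rpow (hθ : 0 < θ) :
    ∀ᶠ x in atTop, 0 ≤ x - ξ * x ^ (1 - θ) := by
  filter_upwards [eventually_gt_atTop 0, eventually_nonneg_one_sub_mul_inv_rpow ξ hθ]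
    with x hx hξ
  rw [sub_mul_rpow_one_sub ξ hx]
  positivity

/-- With `t = x^{-θ}`, the difference is the difference quotient of `t ↦ (1 - ξ t)^θ` at `0`. -/
lemma tendsto_rpow_sub_mul_rpow_sub_rpow (hθ : 0 < θ) :
    Tendsto (fun x : ℝ => (x - ξ * x ^ (1 - θ)) ^ θ - x ^ θ) atTop (𝓝 (-(θ * ξ))) := by
  have hderiv : HasDerivAt (fun t : ℝ => (1 - ξ * t) ^ θ) (-(θ * ξ)) 0 := by
    simpa [mul_comm] using
      (((hasDerivAt_id (0 : ℝ)).const_mul ξ).const_sub 1).rpow_const (p := θ) (by simp)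
  have ht : Tendsto (fun x : ℝ => (x ^ θ)⁻¹) atTop (𝓝[≠] 0) :=
    tendsto_nhdsWithin_mono_right (fun _ h => ne_of_gt h)
      (tendsto_inv_atTop_nhdsGT_zero.comp (tendsto_rpow_atTop hθ))
  refine (hderiv.tendsto_slope_zero.comp ht).congr' ?_
  filter_upwards [eventually_gt_atTop 0, eventually_nonneg_one_sub_mul_inv_rpow ξ hθ]
    with x hx hξ
  simp only [Function.comp_apply, zero_add, mul_zero, sub_zero, Real.one_rpow, inv_inv,
    smul_eq_mul]
  rw [sub_mul_rpow_one_sub ξ hx, Real.mul_rpow hx.le hξ]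
  ring

end Expansion

theorem stmt2_general {Ω : Type*} [MeasurableSpace Ω] (μ : Measure Ω) [IsProbabilityMeasure μ]
    (X : Ω → ℝ) (hX : ∀ ω, 0 ≤ X ω) (θ : ℝ) (hθ0 : 0 < θ) :
    LongTailed μ (fun ω => X ω ^ θ) ↔
      ((∀ x ≥ 0, 0 < tailP μ X x) ∧
        ∀ ξ : ℝ, Tendsto (fun x => tailP μ X (x - ξ * x ^ (1 - θ)) / tailP μ X x)
          atTop (nhds 1)) := by
  have hT (s : ℝ) (hs : 0 ≤ s) : tailP μ (fun ω => X ω ^ θ) (s ^ θ) = tailP μ X s :=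
    tailP_rpow_rpow μ hX hθ0 hs
  have hratio (ξ : ℝ) : (fun x => tailP μ (fun ω => X ω ^ θ) ((x - ξ * x ^ (1 - θ)) ^ θ) /
      tailP μ (fun ω => X ω ^ θ) (x ^ θ)) =ᶠ[atTop]
      fun x => tailP μ X (x - ξ * x ^ (1 - θ)) / tailP μ X x := by
    filter_upwards [eventually_ge_atTop 0, eventually_nonneg_sub_mul_rpow ξ hθ0] with x hx hξ
    rw [hT _ hξ, hT _ hx]
  have hexp (ξ : ℝ) := tendsto_rpow_sub_mul_rpow_sub_rpow ξ hθ0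
  constructor
  · rintro ⟨hTpos, hlong⟩
    refine ⟨fun s hs => hT s hs ▸ hTpos _ (by positivity), fun ξ => ?_⟩
    exact ((tailP_antitone μ _).tendsto_div_of_tendsto_sub (tailP_nonneg μ _) hlong
      (tendsto_rpow_atTop hθ0) (hexp ξ)).congr' (hratio ξ)
  · rintro ⟨hXpos, hlim⟩
    refine ⟨fun t ht => ?_, fun y hy => ?_⟩
    · rw [← Real.rpow_inv_rpow ht hθ0.ne', hT _ (by positivity)]
      exact hXpos _ (by positivity)
    have hshift := (tailP_antitone μ _).tendsto_add_div_of_tendsto_div (tailP_nonneg μ _) hy.le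
      (by field_simp; linarith : y < -(θ * (-(y + 1) / θ)))
      (hexp _) ((hlim _).congr' (hratio _).symm)
    refine (hshift.comp (tendsto_rpow_atTop (inv_pos.2 hθ0))).congr' ?_
    filter_upwards [eventually_ge_atTop 0] with u hu
    simp only [Function.comp_apply, Real.rpow_inv_rpow hu hθ0.ne']

/-- For a nonnegative random variable `X` and `0 < θ ≤ 1`, `X^θ` is long-tailed if and only if
`P(X > x - ξ x^{1-θ}) / P(X > x) → 1` for all `ξ ∈ ℝ` (together with positivity of the tail). -/
theorem stmt2 {Ω : Type*} [MeasurableSpace Ω] (μ : Measure Ω) [IsProbabilityMeasure μ]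
    (X : Ω → ℝ) (hX : ∀ ω, 0 ≤ X ω) (θ : ℝ) (hθ0 : 0 < θ) (hθ1 : θ ≤ 1) :
    LongTailed μ (fun ω => X ω ^ θ) ↔
      ((∀ x ≥ 0, 0 < tailP μ X x) ∧
        ∀ ξ : ℝ, Tendsto (fun x => tailP μ X (x - ξ * x ^ (1 - θ)) / tailP μ X x)
          atTop (nhds 1)) :=
  stmt2_general μ X hX θ hθ0
end

section
/- Let Q be a subexponential concave cumulative hazard function with parameter α ∈ (0,1). If a nonnegative random variable X has cumulative hazard function Q_X = Q (i.e., P(X > x) = e^{-Q(x)}), then for every β with α < β ≤ 1, the random variable X^β is long-tailed. If moreover Q(x)/x^α → 0 as x → ∞, then X^α is long-tailed. -/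
/-!
Put `γ = β⁻¹`. Then `P(X^β > x) = exp (-Q (x^γ))`, so `X^β` is long-tailed as soon as
`Q ((x + y)^γ) - Q (x^γ) → 0`. This increment is eventually nonnegative because a concave `Q`
tending to infinity is nondecreasing. For an upper bound, `Q(v)/v^α ≤ Q(u)/u^α` gives
`Q v - Q u ≤ Q u / u^α * (v^α - u^α)`, and Bernoulli's inequality with exponent `α/β ≤ 1` turns this,
at `u = x^γ`, `v = (x + y)^γ`, into `(α/β) y Q(u)/u^β`. So it suffices that `Q(u)/u^β → 0`: for
`β > α` this follows from the eventual boundedness of `Q(u)/u^α`, and for `β = α` it is assumed.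
-/

open MeasureTheory Filter Set ProbabilityTheory Real

/-- A cumulative hazard function `Q` belongs to the subexponential concave class `𝓢𝓒_α` if:
(i) `Q` is eventually concave; (ii) `Q(x)/log x → ∞`; and
(iii) `Q(x)/x^α` is nonincreasing for all sufficiently large `x`. -/
def SCHazard (Q : ℝ → ℝ) (α : ℝ) : Prop :=
  (∃ x₀ : ℝ, ConcaveOn ℝ (Set.Ici x₀) Q) ∧
  Tendsto (fun x => Q x / Real.log x) atTop atTop ∧
  (∃ x₀ > (0 : ℝ), AntitoneOn (fun x => Q x / x ^ α) (Set.Ici x₀))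

open Topology

lemma ConcaveOn.monotoneOn_of_tendsto_atTop {f : ℝ → ℝ} {x₀ : ℝ} (hf : ConcaveOn ℝ (Ici x₀) f)
    (htop : Tendsto f atTop atTop) : MonotoneOn f (Ici x₀) := by
  intro a ha b hb hab
  by_contra! hlt
  have hab' : a < b := hab.lt_of_ne (by rintro rfl; exact hlt.false)
  obtain ⟨z, hfz, hbz⟩ := ((htop.eventually_ge_atTop (f b)).and (eventually_gt_atTop b)).exists
  have hslope := hf.slope_anti_adjacent ha (mem_Ici.2 (hb.out.trans hbz.le)) hab' hbz
  have : 0 ≤ (f z - f b) / (z - b) := div_nonneg (by linarith) (by linarith)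
  have : (f b - f a) / (b - a) < 0 := div_neg_of_neg_of_pos (by linarith) (by linarith)
  linarith

lemma rpow_add_sub_rpow_le {p x y : ℝ} (hp0 : 0 ≤ p) (hp1 : p ≤ 1) (hx : 0 < x) (hy : 0 ≤ y) :
    (x + y) ^ p - x ^ p ≤ p * y * x ^ (p - 1) := by
  have hyx : 0 ≤ y / x := div_nonneg hy hx.le
  have hbern := rpow_one_add_le_one_add_mul_self (s := y / x) (by linarith) hp0 hp1
  calc (x + y) ^ p - x ^ p = x ^ p * ((1 + y / x) ^ p - 1) := by
        rw [mul_sub, ← mul_rpow hx.le (by linarith), mul_one_add, mul_div_cancel₀ _ hx.ne', mul_one]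
    _ ≤ x ^ p * (p * (y / x)) := by gcongr; linarith
    _ = p * y * x ^ (p - 1) := by rw [rpow_sub_one hx.ne']; ring

lemma sub_le_of_antitoneOn_div_rpow {Q : ℝ → ℝ} {α x₀ u v : ℝ}
    (hanti : AntitoneOn (fun x => Q x / x ^ α) (Ici x₀)) (hx₀ : 0 < x₀) (hu : x₀ ≤ u)
    (huv : u ≤ v) : Q v - Q u ≤ Q u / u ^ α * (v ^ α - u ^ α) := by
  have hu0 : 0 < u ^ α := rpow_pos_of_pos (hx₀.trans_le hu) α
  have hv0 : 0 < v ^ α := rpow_pos_of_pos (hx₀.trans_le (hu.trans huv)) α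
  have h := hanti hu (mem_Ici.2 (hu.trans huv)) huv
  rw [div_le_div_iff₀ hv0 hu0] at h
  have : Q v ≤ Q u / u ^ α * v ^ α := by rw [div_mul_eq_mul_div, le_div_iff₀ hu0]; linarith
  rw [mul_sub, div_mul_cancel₀ _ hu0.ne']
  linarith

lemma tendsto_div_rpow_zero_of_antitoneOn {Q : ℝ → ℝ} {α β x₀ : ℝ}
    (hanti : AntitoneOn (fun x => Q x / x ^ α) (Ici x₀)) (hx₀ : 0 < x₀) (hαβ : α < β)
    (hpos : ∀ᶠ x in atTop, 0 ≤ Q x) : Tendsto (fun x => Q x / x ^ β) atTop (𝓝 0) := by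
  have hdecay : Tendsto (fun x : ℝ => Q x₀ / x₀ ^ α * x ^ (α - β)) atTop (𝓝 0) := by
    simpa using (tendsto_rpow_neg_atTop (sub_pos.2 hαβ)).const_mul (Q x₀ / x₀ ^ α)
      |>.congr fun x => by rw [neg_sub]
  refine tendsto_of_tendsto_of_tendsto_of_le_of_le' tendsto_const_nhds hdecay ?_ ?_
  · filter_upwards [hpos, eventually_ge_atTop 0] with x hQx hx
    exact div_nonneg hQx (rpow_nonneg hx β)
  · filter_upwards [eventually_ge_atTop x₀] with x hx
    have hx0 : 0 < x := hx₀.trans_le hx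
    calc Q x / x ^ β = Q x / x ^ α * x ^ (α - β) := by
          rw [rpow_sub hx0]
          field_simp
      _ ≤ Q x₀ / x₀ ^ α * x ^ (α - β) :=
          mul_le_mul_of_nonneg_right (hanti (mem_Ici.2 le_rfl) hx hx) (rpow_nonneg hx0.le _)

lemma tendsto_sub_comp_rpow_inv {Q : ℝ → ℝ} {α β x₀ x₁ y : ℝ} (hα : 0 < α) (hαβ : α ≤ β)
    (hx₀ : 0 < x₀) (hanti : AntitoneOn (fun x => Q x / x ^ α) (Ici x₀))
    (hmono : MonotoneOn Q (Ici x₁)) (hpos : ∀ᶠ x in atTop, 0 ≤ Q x)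
    (hlim : Tendsto (fun x => Q x / x ^ β) atTop (𝓝 0)) (hy : 0 ≤ y) :
    Tendsto (fun x => Q ((x + y) ^ β⁻¹) - Q (x ^ β⁻¹)) atTop (𝓝 0) := by
  have hβ : 0 < β := hα.trans_le hαβ
  set p := α / β
  have hp0 : 0 ≤ p := div_nonneg hα.le hβ.le
  have hp1 : p ≤ 1 := (div_le_one hβ).2 hαβ
  have hpow : ∀ x : ℝ, 0 ≤ x → (x ^ β⁻¹) ^ α = x ^ p := fun x hx => by
    rw [← rpow_mul hx, inv_mul_eq_div]
  have hroot : Tendsto (fun x : ℝ => x ^ β⁻¹) atTop atTop := tendsto_rpow_atTop (inv_pos.2 hβ)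
  have hupper : Tendsto (fun x => p * y * (Q (x ^ β⁻¹) / (x ^ β⁻¹) ^ β)) atTop (𝓝 0) := by
    simpa using (hlim.comp hroot).const_mul (p * y)
  refine tendsto_of_tendsto_of_tendsto_of_le_of_le' tendsto_const_nhds hupper ?_ ?_
  · filter_upwards [hroot.eventually_ge_atTop x₁, eventually_ge_atTop 0] with x hx hx0
    have huv : x ^ β⁻¹ ≤ (x + y) ^ β⁻¹ := by gcongr; linarith
    exact sub_nonneg.2 (hmono hx (mem_Ici.2 (le_trans hx huv)) huv)
  · filter_upwards [hroot.eventually_ge_atTop x₀, hroot.eventually hpos, eventually_gt_atTop 0]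
      with x hx hQx hx0
    have huv : x ^ β⁻¹ ≤ (x + y) ^ β⁻¹ := by gcongr; linarith
    have hxβ : (x ^ β⁻¹) ^ β = x := rpow_inv_rpow hx0.le hβ.ne'
    calc Q ((x + y) ^ β⁻¹) - Q (x ^ β⁻¹)
        ≤ Q (x ^ β⁻¹) / (x ^ β⁻¹) ^ α * (((x + y) ^ β⁻¹) ^ α - (x ^ β⁻¹) ^ α) :=
          sub_le_of_antitoneOn_div_rpow hanti hx₀ hx huv
      _ = Q (x ^ β⁻¹) / x ^ p * ((x + y) ^ p - x ^ p) := by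
          rw [hpow x hx0.le, hpow (x + y) (by linarith)]
      _ ≤ Q (x ^ β⁻¹) / x ^ p * (p * y * x ^ (p - 1)) := by
          gcongr
          exact rpow_add_sub_rpow_le hp0 hp1 hx0 hy
      _ = p * y * (Q (x ^ β⁻¹) / (x ^ β⁻¹) ^ β) := by
          rw [hxβ, rpow_sub_one hx0.ne']
          field_simp

section Tail

variable {Ω : Type*} [MeasurableSpace Ω] (μ : Measure Ω)

lemma tailP_rpow {X : Ω → ℝ} (hX : ∀ ω, 0 ≤ X ω) {β x : ℝ} (hβ : 0 < β) (hx : 0 ≤ x) :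
    tailP μ (fun ω => X ω ^ β) x = tailP μ X (x ^ β⁻¹) := by
  have hset : {ω | x < X ω ^ β} = {ω | x ^ β⁻¹ < X ω} := by
    ext ω
    exact (rpow_inv_lt_iff_of_pos hx (hX ω) hβ).symm
  simp only [tailP, hset]

lemma longTailed_of_tailP_eq_exp {Y : Ω → ℝ} {R : ℝ → ℝ}
    (htail : ∀ x ≥ 0, tailP μ Y x = exp (-R x))
    (hR : ∀ y > 0, Tendsto (fun x => R (x + y) - R x) atTop (𝓝 0)) : LongTailed μ Y := by
  refine ⟨fun x hx => htail x hx ▸ exp_pos _, fun y hy => ?_⟩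
  have hexp : Tendsto (fun x => exp (-(R (x + y) - R x))) atTop (𝓝 1) := by
    simpa using (hR y hy).neg.rexp
  refine hexp.congr' ?_
  filter_upwards [eventually_ge_atTop 0] with x hx
  rw [htail x hx, htail (x + y) (by linarith), ← exp_sub]
  ring_nf

end Tail

namespace SCHazard

variable {Q : ℝ → ℝ} {α : ℝ}

lemma tendsto_atTop (hQ : SCHazard Q α) : Tendsto Q atTop atTop := by
  refine (hQ.2.1.atTop_mul_atTop₀ tendsto_log_atTop).congr' ?_
  filter_upwards [eventually_gt_atTop 1] with x hx
  exact div_mul_cancel₀ _ (log_pos hx).ne'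

lemma tendsto_div_rpow_zero (hQ : SCHazard Q α) {β : ℝ} (hαβ : α < β) :
    Tendsto (fun x => Q x / x ^ β) atTop (𝓝 0) :=
  let ⟨_, hx₀, hanti⟩ := hQ.2.2
  tendsto_div_rpow_zero_of_antitoneOn hanti hx₀ hαβ (hQ.tendsto_atTop.eventually_ge_atTop 0)

lemma longTailed_rpow (hQ : SCHazard Q α) (hα : 0 < α) {β : ℝ} (hαβ : α ≤ β)
    (hlim : Tendsto (fun x => Q x / x ^ β) atTop (𝓝 0)) {Ω : Type*} [MeasurableSpace Ω]
    {μ : Measure Ω} {X : Ω → ℝ} (hX : ∀ ω, 0 ≤ X ω)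
    (htail : ∀ x ≥ 0, tailP μ X x = exp (-Q x)) : LongTailed μ (fun ω => X ω ^ β) := by
  have htop := hQ.tendsto_atTop
  obtain ⟨⟨x₁, hconc⟩, -, ⟨x₀, hx₀, hanti⟩⟩ := hQ
  have hβ : 0 < β := hα.trans_le hαβ
  refine longTailed_of_tailP_eq_exp μ (R := fun x => Q (x ^ β⁻¹)) (fun x hx => ?_)
    (fun y hy => tendsto_sub_comp_rpow_inv hα hαβ hx₀ hanti
      (hconc.monotoneOn_of_tendsto_atTop htop) (htop.eventually_ge_atTop 0) hlim hy.le)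
  rw [tailP_rpow μ hX hβ hx, htail _ (rpow_nonneg hx _)]

end SCHazard

theorem stmt7_general {Ω : Type*} [MeasurableSpace Ω] (μ : Measure Ω)
    (X : Ω → ℝ) (hX : ∀ ω, 0 ≤ X ω)
    (Q : ℝ → ℝ) (α : ℝ) (hα0 : 0 < α) (hQ : SCHazard Q α)
    (htail : ∀ x ≥ 0, tailP μ X x = Real.exp (-(Q x))) :
    (∀ β : ℝ, α < β → β ≤ 1 → LongTailed μ (fun ω => X ω ^ β)) ∧
    (Tendsto (fun x => Q x / x ^ α) atTop (nhds 0) →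
      LongTailed μ (fun ω => X ω ^ α)) :=
  ⟨fun _ hαβ _ => hQ.longTailed_rpow hα0 hαβ.le (hQ.tendsto_div_rpow_zero hαβ) hX htail,
    fun hlim => hQ.longTailed_rpow hα0 le_rfl hlim hX htail⟩

/-- Let `Q ∈ 𝓢𝓒_α` with `α ∈ (0,1)` and let `X ≥ 0` have `P(X > x) = e^{-Q(x)}`.
Then `X^β` is long-tailed for every `α < β ≤ 1`; if moreover `Q(x)/x^α → 0`,
then `X^α` is long-tailed. -/
theorem stmt7 {Ω : Type*} [MeasurableSpace Ω] (μ : Measure Ω) [IsProbabilityMeasure μ]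
    (X : Ω → ℝ) (hX : ∀ ω, 0 ≤ X ω)
    (Q : ℝ → ℝ) (α : ℝ) (hα0 : 0 < α) (hα1 : α < 1) (hQ : SCHazard Q α)
    (htail : ∀ x ≥ 0, tailP μ X x = Real.exp (-(Q x))) :
    (∀ β : ℝ, α < β → β ≤ 1 → LongTailed μ (fun ω => X ω ^ β)) ∧
    (Tendsto (fun x => Q x / x ^ α) atTop (nhds 0) →
      LongTailed μ (fun ω => X ω ^ α)) :=
  stmt7_general μ X hX Q α hα0 hQ htail
end

section
/- Let X, X₁, X₂, … be i.i.d. nonnegative random variables with E[X] > 0 and E[X²] < ∞, and let N_X(x) = max{k ≥ 0 : X₁ + ⋯ + X_k ≤ x}. Then for every δ > 0 there exist finite positive constants C̃ = C̃(δ) and c̃ = c̃(δ) such that for all x ≥ 0 and all 0 ≤ u ≤ δx: P(N_X(x) − x/E[X] > u) ≤ C̃ exp{−c̃ u²/x}. -/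
/-! Let `S_k = X₁ + ⋯ + X_k`. The event `N_X(x) - x/E[X] > u` forces `S_k ≤ x` for
`k = ⌈x/E[X] + u⌉₊`, i.e. the sum of `k` summands falls short of its mean `k E[X]` by at
least `u E[X]`. For nonnegative summands `exp(-λ X) ≤ 1 - λ X + λ² X²`, so the exponential
Markov bound gives `P(S_k ≤ x) ≤ exp(-(k E[X] - x)² / (4 k E[X²]))`, a sub-Gaussian lower tail
that needs only a second moment. Since `k ≤ (1/E[X] + δ + 1) x` once `x ≥ 1`, this is at most
`exp(-c u²/x)`; for `x < 1` the constraint `u ≤ δ x` makes `u²/x ≤ δ²`, absorbed into `C`. -/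

open MeasureTheory Filter Set ProbabilityTheory Real

lemma exp_neg_le_one_sub_add_sq {y : ℝ} (hy : 0 ≤ y) : exp (-y) ≤ 1 - y + y ^ 2 := by
  have hpos : 0 < 1 + y := by linarith
  calc exp (-y) = (exp y)⁻¹ := exp_neg y
    _ ≤ (1 + y)⁻¹ := inv_anti₀ hpos (by linarith [add_one_le_exp y])
    _ ≤ 1 - y + y ^ 2 := by
      rw [inv_le_iff_one_le_mul₀' hpos]
      nlinarith [pow_nonneg hy 3]

/-- The paper's `N_a(x)`. As `sSup` of an unbounded set of naturals is `0`, this is `0` when every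
partial sum is at most `x`. -/
noncomputable def renewalCount (a : ℕ → ℝ) (x : ℝ) : ℕ :=
  sSup {k : ℕ | ∑ i ∈ Finset.range k, a i ≤ x}

lemma sum_range_le_of_le_renewalCount {a : ℕ → ℝ} (ha : ∀ i, 0 ≤ a i) {x : ℝ} (hx : 0 ≤ x)
    {n : ℕ} (hn : n ≤ renewalCount a x) : ∑ i ∈ Finset.range n, a i ≤ x := by
  set S := {k : ℕ | ∑ i ∈ Finset.range k, a i ≤ x}
  by_cases hS : BddAbove S
  · have hmem : sSup S ∈ S := Nat.sSup_mem ⟨0, by simpa [S] using hx⟩ hS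
    exact (Finset.sum_le_sum_of_subset_of_nonneg (Finset.range_subset_range.2 hn)
      fun i _ _ => ha i).trans hmem
  · rw [renewalCount, Nat.sSup_of_not_bddAbove hS, Nat.le_zero] at hn
    simpa [hn] using hx

lemma one_le_exp_mul_exp_neg_sq_div {c δ x u : ℝ} (hc : 0 ≤ c) (hx : 0 ≤ x) (hx1 : x ≤ 1)
    (hu : 0 ≤ u) (hux : u ≤ δ * x) : 1 ≤ exp (c * δ ^ 2) * exp (-c * u ^ 2 / x) := by
  have hux2 : u ^ 2 / x ≤ δ ^ 2 := by
    rcases hx.eq_or_lt with rfl | hxpos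
    · simp [sq_nonneg]
    · rw [div_le_iff₀ hxpos]
      nlinarith
  rw [← exp_add, one_le_exp_iff, mul_div_assoc]
  nlinarith [mul_le_mul_of_nonneg_left hux2 hc]

section Chernoff

variable {Ω : Type*} [MeasurableSpace Ω] {μ : Measure Ω}

lemma integrable_exp_neg_mul_of_nonneg [IsFiniteMeasure μ] {Y : Ω → ℝ} (hY : Measurable Y)
    (hnonneg : ∀ ω, 0 ≤ Y ω) {l : ℝ} (hl : 0 ≤ l) : Integrable (fun ω => exp (-l * Y ω)) μ := by
  refine .of_bound (by fun_prop) 1 (ae_of_all _ fun ω => ?_)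
  rw [norm_of_nonneg (exp_pos _).le, exp_le_one_iff]
  nlinarith [hnonneg ω]

variable [IsProbabilityMeasure μ]

lemma sq_integral_le_integral_sq {Y : Ω → ℝ} (hY : MemLp Y 2 μ) :
    μ[Y] ^ 2 ≤ ∫ ω, Y ω ^ 2 ∂μ := by
  have hvar := variance_nonneg Y μ
  rw [variance_eq_sub hY] at hvar
  simp only [Pi.pow_apply] at hvar
  linarith

lemma mgf_neg_le_exp_of_nonneg {Y : Ω → ℝ} (hY : Measurable Y) (hnonneg : ∀ ω, 0 ≤ Y ω)
    (hsq : Integrable (fun ω => Y ω ^ 2) μ) {l : ℝ} (hl : 0 ≤ l) :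
    mgf Y μ (-l) ≤ exp (-(l * μ[Y]) + l ^ 2 * ∫ ω, Y ω ^ 2 ∂μ) := by
  have hint : Integrable Y μ :=
    ((memLp_two_iff_integrable_sq hY.aestronglyMeasurable).2 hsq).integrable one_le_two
  have hlin : Integrable (fun ω => 1 - l * Y ω) μ := (integrable_const 1).sub (hint.const_mul l)
  have hquad : Integrable (fun ω => l ^ 2 * Y ω ^ 2) μ := hsq.const_mul _
  calc mgf Y μ (-l) ≤ ∫ ω, (1 - l * Y ω + l ^ 2 * Y ω ^ 2) ∂μ := by
        refine integral_mono (integrable_exp_neg_mul_of_nonneg hY hnonneg hl) (hlin.add hquad)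
          fun ω => ?_
        simpa [neg_mul, mul_pow] using exp_neg_le_one_sub_add_sq (mul_nonneg hl (hnonneg ω))
    _ = 1 + (-(l * μ[Y]) + l ^ 2 * ∫ ω, Y ω ^ 2 ∂μ) := by
        rw [integral_add hlin hquad, integral_sub (integrable_const 1) (hint.const_mul l),
          integral_const_mul, integral_const_mul]
        simp only [integral_const, probReal_univ, smul_eq_mul, mul_one]
        ring
    _ ≤ _ := by linarith [add_one_le_exp (-(l * μ[Y]) + l ^ 2 * ∫ ω, Y ω ^ 2 ∂μ)]

variable {X : ℕ → Ω → ℝ}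

lemma measureReal_sum_range_le_le_exp (hmeas : ∀ n, Measurable (X n))
    (hnonneg : ∀ n ω, 0 ≤ X n ω) (hindep : iIndepFun X μ)
    (hident : ∀ n, IdentDistrib (X n) (X 0) μ μ) (hsq : Integrable (fun ω => X 0 ω ^ 2) μ)
    {l : ℝ} (hl : 0 ≤ l) (k : ℕ) (x : ℝ) :
    μ.real {ω | ∑ i ∈ Finset.range k, X i ω ≤ x}
      ≤ exp (l * x + k * (-(l * μ[X 0]) + l ^ 2 * ∫ ω, X 0 ω ^ 2 ∂μ)) := by
  have hint : Integrable (fun ω => exp (-l * (∑ i ∈ Finset.range k, X i) ω)) μ :=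
    hindep.integrable_exp_mul_sum hmeas
      fun i _ => integrable_exp_neg_mul_of_nonneg (hmeas i) (hnonneg i) hl
  have hmgf : mgf (∑ i ∈ Finset.range k, X i) μ (-l) = mgf (X 0) μ (-l) ^ k := by
    rw [hindep.mgf_sum hmeas, Finset.prod_congr rfl fun i _ =>
      mgf_congr_of_identDistrib (X i) (X 0) (hident i) (-l), Finset.prod_const,
      Finset.card_range]
  calc μ.real {ω | ∑ i ∈ Finset.range k, X i ω ≤ x}
      ≤ exp (-(-l) * x) * mgf (∑ i ∈ Finset.range k, X i) μ (-l) := by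
        simpa only [Finset.sum_apply] using
          measure_le_le_exp_mul_mgf x (neg_nonpos.2 hl) hint
    _ ≤ exp (l * x) * exp (-(l * μ[X 0]) + l ^ 2 * ∫ ω, X 0 ω ^ 2 ∂μ) ^ k := by
        rw [neg_neg, hmgf]
        gcongr
        · exact mgf_nonneg
        · exact mgf_neg_le_exp_of_nonneg (hmeas 0) (hnonneg 0) hsq hl
    _ = _ := by rw [← exp_nat_mul, ← exp_add]

lemma measureReal_sum_range_le_le_exp_sq (hmeas : ∀ n, Measurable (X n))
    (hnonneg : ∀ n ω, 0 ≤ X n ω) (hindep : iIndepFun X μ)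
    (hident : ∀ n, IdentDistrib (X n) (X 0) μ μ) (hsq : Integrable (fun ω => X 0 ω ^ 2) μ)
    (hB : 0 < ∫ ω, X 0 ω ^ 2 ∂μ) {k : ℕ} (hk : 0 < k) {x : ℝ} (hx : x ≤ k * μ[X 0]) :
    μ.real {ω | ∑ i ∈ Finset.range k, X i ω ≤ x}
      ≤ exp (-(k * μ[X 0] - x) ^ 2 / (4 * k * ∫ ω, X 0 ω ^ 2 ∂μ)) := by
  set E := μ[X 0]
  set B := ∫ ω, X 0 ω ^ 2 ∂μ
  have hk' : (0 : ℝ) < k := Nat.cast_pos.2 hk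
  -- the exponent of `measureReal_sum_range_le_le_exp` is minimised at this `l`
  have hl : 0 ≤ (k * E - x) / (2 * k * B) := div_nonneg (by linarith) (by positivity)
  convert measureReal_sum_range_le_le_exp hmeas hnonneg hindep hident hsq hl k x using 2
  field_simp
  ring

lemma measureReal_renewalCount_sub_gt_le (hmeas : ∀ n, Measurable (X n))
    (hnonneg : ∀ n ω, 0 ≤ X n ω) (hindep : iIndepFun X μ)
    (hident : ∀ n, IdentDistrib (X n) (X 0) μ μ) (hsq : Integrable (fun ω => X 0 ω ^ 2) μ)
    (hmean : 0 < μ[X 0]) (hB : 0 < ∫ ω, X 0 ω ^ 2 ∂μ) {x u K : ℝ} (hx : 0 ≤ x) (hu : 0 ≤ u)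
    (hK : x / μ[X 0] + u + 1 ≤ K) :
    μ.real {ω | (renewalCount (X · ω) x : ℝ) - x / μ[X 0] > u}
      ≤ exp (-(u * μ[X 0]) ^ 2 / (4 * K * ∫ ω, X 0 ω ^ 2 ∂μ)) := by
  set E := μ[X 0]
  set B := ∫ ω, X 0 ω ^ 2 ∂μ
  set k := ⌈x / E + u⌉₊
  have hy : 0 ≤ x / E + u := by positivity
  rcases Nat.eq_zero_or_pos k with hk0 | hkpos
  · obtain rfl : u = 0 := by
      have := Nat.ceil_eq_zero.1 hk0
      linarith [div_nonneg hx hmean.le]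
    simp
  have hk : (0 : ℝ) < k := Nat.cast_pos.2 hkpos
  have hkE : x + u * E ≤ k * E := by
    have := mul_le_mul_of_nonneg_right (Nat.le_ceil (x / E + u)) hmean.le
    rwa [add_mul, div_mul_cancel₀ x hmean.ne'] at this
  have hkK : (k : ℝ) ≤ K := (Nat.ceil_lt_add_one hy).le.trans hK
  have hevent : {ω | (renewalCount (X · ω) x : ℝ) - x / E > u}
      ⊆ {ω | ∑ i ∈ Finset.range k, X i ω ≤ x} := fun ω hω =>
    sum_range_le_of_le_renewalCount (hnonneg · ω) hx
      (Nat.ceil_le.2 (by rw [mem_ofPred_eq] at hω; linarith))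
  calc μ.real _ ≤ μ.real {ω | ∑ i ∈ Finset.range k, X i ω ≤ x} := measureReal_mono hevent
    _ ≤ exp (-(k * E - x) ^ 2 / (4 * k * B)) :=
      measureReal_sum_range_le_le_exp_sq hmeas hnonneg hindep hident hsq hB hkpos
        (by nlinarith)
    _ ≤ exp (-(u * E) ^ 2 / (4 * K * B)) := by
      rw [exp_le_exp, neg_div, neg_div, neg_le_neg_iff]
      exact div_le_div₀ (by positivity) (pow_le_pow_left₀ (by positivity) (by linarith) 2)
        (by positivity) (by gcongr)

end Chernoff

/-- Renewal counting process bound: if `X, X₁, X₂, …` are i.i.d. nonnegative with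
`E[X] > 0` and `E[X²] < ∞`, and `N_X(x) = max{k ≥ 0 : X₁ + ⋯ + X_k ≤ x}`, then for every
`δ > 0` there are `C̃, c̃ > 0` with
`P(N_X(x) - x/E[X] > u) ≤ C̃ exp(-c̃ u²/x)` for all `x ≥ 0` and `0 ≤ u ≤ δx`. -/
theorem stmt8 {Ω : Type*} [MeasurableSpace Ω] (μ : Measure Ω) [IsProbabilityMeasure μ]
    (X : ℕ → Ω → ℝ) (hmeas : ∀ n, Measurable (X n))
    (hnonneg : ∀ n ω, 0 ≤ X n ω)
    (hindep : iIndepFun X μ)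
    (hident : ∀ n, μ.map (X n) = μ.map (X 0))
    (hmean : 0 < ∫ ω, X 0 ω ∂μ)
    (hsq : Integrable (fun ω => (X 0 ω) ^ 2) μ) :
    ∀ δ > (0 : ℝ), ∃ C > (0 : ℝ), ∃ c > (0 : ℝ), ∀ x ≥ (0 : ℝ), ∀ u, 0 ≤ u → u ≤ δ * x →
      (μ {ω | (↑(sSup {k : ℕ | ∑ i ∈ Finset.range k, X i ω ≤ x}) : ℝ)
          - x / (∫ ω', X 0 ω' ∂μ) > u}).toReal ≤ C * Real.exp (-c * u ^ 2 / x) := by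
  intro δ hδ
  set E := ∫ ω, X 0 ω ∂μ
  set B := ∫ ω, X 0 ω ^ 2 ∂μ
  have hB : 0 < B := by
    have := sq_integral_le_integral_sq (μ := μ)
      ((memLp_two_iff_integrable_sq (hmeas 0).aestronglyMeasurable).2 hsq)
    nlinarith
  have hidentDistrib : ∀ n, IdentDistrib (X n) (X 0) μ μ := fun n =>
    ⟨(hmeas n).aemeasurable, (hmeas 0).aemeasurable, hident n⟩
  -- `A * x` absorbs the rounding in `⌈x / E + u⌉₊` once `x ≥ 1`
  set A := 1 / E + δ + 1
  set c := E ^ 2 / (4 * A * B)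
  refine ⟨exp (c * δ ^ 2), exp_pos _, c, by positivity, fun x hx u hu hux => ?_⟩
  rcases le_or_gt x 1 with hx1 | hx1
  · exact measureReal_le_one.trans
      (one_le_exp_mul_exp_neg_sq_div (by positivity) hx hx1 hu hux)
  have hK : x / E + u + 1 ≤ A * x := by
    simp only [A]
    rw [add_mul, add_mul, one_div_mul_eq_div]
    linarith
  calc μ.real _ ≤ exp (-(u * E) ^ 2 / (4 * (A * x) * B)) :=
        measureReal_renewalCount_sub_gt_le hmeas hnonneg hindep hidentDistrib hsq hmean hB
          hx hu hK
    _ = exp (-c * u ^ 2 / x) := by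
        simp only [c]
        field_simp
    _ ≤ exp (c * δ ^ 2) * exp (-c * u ^ 2 / x) :=
        le_mul_of_one_le_left (exp_pos _).le (one_le_exp (by positivity))
end

section
/- Suppose T has a consistently varying tail (T ∈ 𝓒) and P(T > x) ∼ x^{-α} for some 0 < α < 1, and X is a nonnegative random variable with P(X > x) = (x+1)^{-β} for some 1 < β < α + 1. Then E[X^r] < ∞ for all 1 ≤ r < β, E[T] = ∞, and E[T · 1(T ≤ x)] = O(x P(T > x)), while it is NOT the case that x P(X > x) = o(P(T > x)). -/
open MeasureTheory Filter Set ProbabilityTheory Real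

/-- A nonnegative random variable `X` has a consistently varying tail (`X ∈ 𝓒`) if
`P(X > x) > 0` for all `x ≥ 0` and `lim_{v↓1} liminf_{x→∞} P(X > vx)/P(X > x) = 1`. -/
def ConsistentVar {Ω : Type*} [MeasurableSpace Ω] (μ : Measure Ω) (X : Ω → ℝ) : Prop :=
  (∀ x ≥ 0, 0 < tailP μ X x) ∧
  Tendsto (fun v => Filter.liminf (fun x => tailP μ X (v * x) / tailP μ X x) atTop)
    (nhdsWithin 1 (Set.Ioi 1)) (nhds 1)

/-!
Since `P(T > x) ≍ x ^ (-α)` with `α < 1`, the layer-cake formula `E[T] = ∫₀^∞ P(T > t) dt`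
diverges, while `E[T · 1(T ≤ x)] ≤ ∫₀^x P(T > t) dt = O(x ^ (1 - α)) = O(x P(T > x))`.
For `X` the layer-cake formula `E[X ^ r] = r ∫₀^∞ t ^ (r - 1) P(X > t) dt` converges because
`r - 1 - β < -1`. Finally `x P(X > x) ≍ x ^ (1 - β)`, which is not `o(x ^ (-α))` because
`1 - β > -α`.
-/

open Asymptotics

namespace tailP

variable {Ω : Type*} [MeasurableSpace Ω] {μ : Measure Ω} {X : Ω → ℝ}

lemma nonneg (t : ℝ) : 0 ≤ tailP μ X t := ENNReal.toReal_nonneg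

lemma le_one [IsProbabilityMeasure μ] (t : ℝ) : tailP μ X t ≤ 1 :=
  measureReal_le_one

variable [IsFiniteMeasure μ]

lemma ofReal_eq (t : ℝ) : ENNReal.ofReal (tailP μ X t) = μ {ω | t < X ω} :=
  ENNReal.ofReal_toReal (measure_ne_top μ _)

lemma le_measureReal_univ (t : ℝ) : tailP μ X t ≤ μ.real univ :=
  measureReal_mono (subset_univ _)

lemma antitone : Antitone (tailP μ X) := fun _ _ hst =>
  ENNReal.toReal_mono (measure_ne_top μ _) (measure_mono fun _ h => hst.trans_lt h)

lemma measurable : Measurable (tailP μ X) := tailP.antitone.measurable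

lemma integrableOn_Ioc {a b : ℝ} : IntegrableOn (tailP μ X) (Ioc a b) :=
  Integrable.of_bound tailP.measurable.aestronglyMeasurable (μ.real univ) <|
    ae_of_all _ fun t => (norm_of_nonneg (tailP.nonneg t)).trans_le (tailP.le_measureReal_univ t)

end tailP

section Moments

variable {Ω : Type*} [MeasurableSpace Ω] {μ : Measure Ω} [IsFiniteMeasure μ] {X : Ω → ℝ}

lemma integrableOn_tailP_Ioi (hX : Integrable X μ) (hX0 : 0 ≤ᵐ[μ] X) :
    IntegrableOn (tailP μ X) (Ioi 0) := by
  refine ⟨tailP.measurable.aestronglyMeasurable, ?_⟩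
  rw [hasFiniteIntegral_iff_ofReal (ae_of_all _ tailP.nonneg)]
  simp_rw [tailP.ofReal_eq, ← lintegral_eq_lintegral_meas_lt μ hX0 hX.aemeasurable]
  exact hX.lintegral_lt_top

lemma not_integrable_of_rpow_isBigO_tailP {α : ℝ} (hα : α ≤ 1) (hX0 : 0 ≤ᵐ[μ] X)
    (h : (fun t => t ^ (-α)) =O[atTop] tailP μ X) : ¬ Integrable X μ := by
  intro hX
  have hmeas : Measurable fun t : ℝ => t ^ (-α) := by fun_prop
  have hrpow : IntegrableAtFilter (fun t : ℝ => t ^ (-α)) atTop :=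
    h.integrableAtFilter hmeas.stronglyMeasurable.stronglyMeasurableAtFilter
      ⟨Ioi 0, Ioi_mem_atTop 0, integrableOn_tailP_Ioi hX hX0⟩
  linarith [integrableAtFilter_rpow_atTop_iff.mp hrpow]

lemma integrableOn_tailP_mul_rpow {r β : ℝ} (hr : 0 < r) (hrβ : r < β)
    (h : tailP μ X =O[atTop] fun t => t ^ (-β)) :
    IntegrableOn (fun t => tailP μ X t * t ^ (r - 1)) (Ioi 0) := by
  obtain ⟨c, hc⟩ := h.bound
  obtain ⟨a, ha⟩ := eventually_atTop.mp hc
  set b := max a 1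
  have hb : 0 < b := lt_max_of_lt_right one_pos
  have hmeas : AEStronglyMeasurable (fun t => tailP μ X t * t ^ (r - 1)) :=
    (tailP.measurable.mul (by fun_prop)).aestronglyMeasurable
  rw [← Ioc_union_Ioi_eq_Ioi hb.le]
  refine IntegrableOn.union ?_ ?_
  · have hsmall : IntegrableOn (fun t : ℝ => t ^ (r - 1)) (Ioc 0 b) :=
      (intervalIntegral.intervalIntegrable_rpow' (by linarith : -1 < r - 1)).1
    refine Integrable.mono' (hsmall.const_mul (μ.real univ)) hmeas.restrict ?_
    filter_upwards [ae_restrict_mem measurableSet_Ioc] with t ht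
    have ht0 : 0 ≤ t ^ (r - 1) := rpow_nonneg ht.1.le _
    rw [norm_mul, norm_of_nonneg (tailP.nonneg t), norm_of_nonneg ht0]
    exact mul_le_mul_of_nonneg_right (tailP.le_measureReal_univ t) ht0
  · have hlarge := integrableOn_Ioi_rpow_of_lt (by linarith : r - 1 - β < -1) hb
    refine Integrable.mono' (hlarge.const_mul c) hmeas.restrict ?_
    filter_upwards [ae_restrict_mem measurableSet_Ioi] with t ht
    have ht0 : 0 < t := hb.trans ht
    have hbound := ha t ((le_max_left a 1).trans ht.le)
    rw [norm_of_nonneg (tailP.nonneg t), norm_of_nonneg (rpow_nonneg ht0.le _)] at hbound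
    rw [norm_mul, norm_of_nonneg (tailP.nonneg t), norm_of_nonneg (rpow_nonneg ht0.le _),
      show r - 1 - β = -β + (r - 1) by ring, rpow_add ht0, ← mul_assoc]
    exact mul_le_mul_of_nonneg_right hbound (rpow_nonneg ht0.le _)

lemma integrable_rpow_of_tailP_isBigO {r β : ℝ} (hX0 : 0 ≤ᵐ[μ] X) (hX : AEMeasurable X μ)
    (hr : 0 < r) (hrβ : r < β) (h : tailP μ X =O[atTop] fun t => t ^ (-β)) :
    Integrable (fun ω => X ω ^ r) μ := by
  have hnn : 0 ≤ᵐ[μ] fun ω => X ω ^ r := hX0.mono fun ω hω => rpow_nonneg hω r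
  refine ⟨(hX.pow_const r).aestronglyMeasurable, ?_⟩
  rw [hasFiniteIntegral_iff_ofReal hnn, lintegral_rpow_eq_lintegral_meas_lt_mul μ hX0 hX hr]
  have hlayer : ∀ t, μ {ω | t < X ω} * ENNReal.ofReal (t ^ (r - 1))
      = ENNReal.ofReal (tailP μ X t * t ^ (r - 1)) := fun t => by
    rw [ENNReal.ofReal_mul (tailP.nonneg t), tailP.ofReal_eq]
  simp_rw [hlayer]
  exact ENNReal.mul_lt_top ENNReal.ofReal_lt_top
    (integrableOn_tailP_mul_rpow hr hrβ h).lintegral_lt_top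

end Moments

section TruncatedMean

variable {Ω : Type*} [MeasurableSpace Ω] {μ : Measure Ω} {X : Ω → ℝ}

noncomputable def truncMean (μ : Measure Ω) (X : Ω → ℝ) (x : ℝ) : ℝ :=
  ∫ ω in {ω | X ω ≤ x}, X ω ∂μ

lemma truncMean_nonneg (hX0 : ∀ ω, 0 ≤ X ω) (x : ℝ) : 0 ≤ truncMean μ X x :=
  integral_nonneg hX0

lemma truncMean_le_integral_tailP [IsFiniteMeasure μ] (hX0 : ∀ ω, 0 ≤ X ω)
    (hX : Measurable X) {x : ℝ} (hx : 0 ≤ x) : truncMean μ X x ≤ ∫ t in Ioc 0 x, tailP μ X t := by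
  have hmin : Integrable (fun ω => min (X ω) x) μ :=
    Integrable.of_bound (hX.min measurable_const).aestronglyMeasurable x (ae_of_all _ fun ω => by
      rw [norm_of_nonneg (le_min (hX0 ω) hx)]; exact min_le_right _ _)
  have hmin0 : 0 ≤ᵐ[μ] fun ω => min (X ω) x := ae_of_all _ fun ω => le_min (hX0 ω) hx
  calc truncMean μ X x = ∫ ω in {ω | X ω ≤ x}, min (X ω) x ∂μ :=
        setIntegral_congr_fun (measurableSet_le hX measurable_const) fun ω hω =>
          (min_eq_left hω).symm
    _ ≤ ∫ ω, min (X ω) x ∂μ := setIntegral_le_integral hmin hmin0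
    _ = ∫ t in Ioi 0, μ.real {ω | t < min (X ω) x} := hmin.integral_eq_integral_meas_lt hmin0
    _ ≤ ∫ t in Ioi 0, (Ioc 0 x).indicator (tailP μ X) t := by
        refine integral_mono_of_nonneg (ae_of_all _ fun t => measureReal_nonneg)
          (tailP.integrableOn_Ioc.integrable_indicator measurableSet_Ioc).integrableOn
          (ae_restrict_of_forall_mem measurableSet_Ioi fun t ht => ?_)
        by_cases htx : t ≤ x
        · rw [indicator_of_mem (show t ∈ Ioc 0 x from ⟨ht, htx⟩)]
          exact measureReal_mono fun ω (hω : t < min (X ω) x) => show t < X ω from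
            hω.trans_le (min_le_left _ _)
        · have hempty : {ω | t < min (X ω) x} = ∅ :=
            eq_empty_of_forall_notMem fun ω hω => htx (hω.le.trans (min_le_right _ _))
          simp only [indicator_of_notMem fun (h : t ∈ Ioc 0 x) => htx h.2, hempty,
            measureReal_empty, le_refl]
    _ = ∫ t in Ioc 0 x, tailP μ X t := by
        rw [setIntegral_indicator measurableSet_Ioc, inter_eq_right.mpr Ioc_subset_Ioi_self]

lemma integral_tailP_Ioc_le [IsFiniteMeasure μ] {α C x : ℝ} (hα : α < 1) (hx : 0 ≤ x)
    (hC : ∀ t > 0, tailP μ X t ≤ C * t ^ (-α)) :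
    ∫ t in Ioc 0 x, tailP μ X t ≤ C / (1 - α) * x ^ (1 - α) := by
  have hrpow : IntegrableOn (fun t : ℝ => C * t ^ (-α)) (Ioc 0 x) :=
    ((intervalIntegral.intervalIntegrable_rpow' (by linarith : (-1 : ℝ) < -α)).1).const_mul C
  calc ∫ t in Ioc 0 x, tailP μ X t ≤ ∫ t in Ioc 0 x, C * t ^ (-α) :=
        setIntegral_mono_on tailP.integrableOn_Ioc hrpow measurableSet_Ioc fun t ht => hC t ht.1
    _ = C / (1 - α) * x ^ (1 - α) := by
        rw [integral_const_mul, ← intervalIntegral.integral_of_le hx,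
          integral_rpow (Or.inl (by linarith)), zero_rpow (by linarith), neg_add_eq_sub]
        field_simp
        ring

lemma exists_tailP_le_mul_rpow [IsProbabilityMeasure μ] {α : ℝ} (hα : 0 ≤ α)
    (h : tailP μ X =O[atTop] fun t => t ^ (-α)) :
    ∃ C, ∀ t > 0, tailP μ X t ≤ C * t ^ (-α) := by
  obtain ⟨c, hc⟩ := h.bound
  obtain ⟨a, ha⟩ := eventually_atTop.mp hc
  set b := max a 1
  have hb : 0 < b := lt_max_of_lt_right one_pos
  refine ⟨max c (b ^ α), fun t ht => ?_⟩
  have ht' : 0 ≤ t ^ (-α) := rpow_nonneg ht.le _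
  rcases le_or_gt b t with hbt | htb
  · have hbound := ha t ((le_max_left a 1).trans hbt)
    rw [norm_of_nonneg (tailP.nonneg t), norm_of_nonneg ht'] at hbound
    exact hbound.trans (mul_le_mul_of_nonneg_right (le_max_left _ _) ht')
  · -- below `b` the tail is at most `1 = b ^ α * b ^ (-α) ≤ b ^ α * t ^ (-α)`
    calc tailP μ X t ≤ b ^ α * b ^ (-α) := by
          rw [← rpow_add hb, add_neg_cancel, rpow_zero]; exact tailP.le_one t
      _ ≤ max c (b ^ α) * t ^ (-α) :=
          mul_le_mul (le_max_right _ _) (rpow_le_rpow_of_nonpos ht htb.le (by linarith))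
            (rpow_nonneg hb.le _) ((rpow_nonneg hb.le _).trans (le_max_right _ _))

lemma truncMean_isBigO_rpow [IsProbabilityMeasure μ] (hX0 : ∀ ω, 0 ≤ X ω) (hX : Measurable X)
    {α : ℝ} (hα0 : 0 ≤ α) (hα1 : α < 1) (h : tailP μ X =O[atTop] fun t => t ^ (-α)) :
    truncMean μ X =O[atTop] fun x => x ^ (1 - α) := by
  obtain ⟨C, hC⟩ := exists_tailP_le_mul_rpow hα0 h
  refine IsBigO.of_bound (C / (1 - α)) ?_
  filter_upwards [eventually_ge_atTop 0] with x hx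
  rw [norm_of_nonneg (truncMean_nonneg hX0 x), norm_of_nonneg (rpow_nonneg hx _)]
  exact (truncMean_le_integral_tailP hX0 hX hx).trans (integral_tailP_Ioc_le hα1 hx hC)

end TruncatedMean

section PowerAsymptotics

lemma not_rpow_isLittleO_rpow {a b : ℝ} (h : b < a) :
    ¬ (fun x : ℝ => x ^ a) =o[atTop] fun x => x ^ b := by
  intro ho
  have hratio : Tendsto (fun x : ℝ => x ^ a / x ^ b) atTop atTop :=
    (tendsto_rpow_atTop (sub_pos.2 h)).congr' <| by
      filter_upwards [eventually_gt_atTop 0] with x hx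
      rw [rpow_sub hx]
  exact not_tendsto_nhds_of_tendsto_atTop hratio 0 ho.tendsto_div_nhds_zero

lemma mul_rpow_neg_eventuallyEq (a : ℝ) :
    (fun x : ℝ => x * x ^ (-a)) =ᶠ[atTop] fun x => x ^ (1 - a) := by
  filter_upwards [eventually_gt_atTop 0] with x hx
  rw [sub_eq_add_neg, rpow_add hx, rpow_one]

lemma rpow_isBigO_mul_add_one_rpow {β : ℝ} (hβ : 0 ≤ β) :
    (fun x : ℝ => x ^ (1 - β)) =O[atTop] fun x => x * (x + 1) ^ (-β) := by
  refine ((mul_rpow_neg_eventuallyEq β).symm.trans_isBigO ?_)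
  refine IsBigO.mul (isBigO_refl _ _) (IsBigO.of_bound (2 ^ β) ?_)
  filter_upwards [eventually_ge_atTop 1] with x hx
  have hx0 : 0 < x := one_pos.trans_le hx
  -- `x + 1 ≤ 2 * x`
  have hle : 2 ^ (-β) * x ^ (-β) ≤ (x + 1) ^ (-β) := by
    rw [← mul_rpow zero_le_two hx0.le]
    exact rpow_le_rpow_of_nonpos (by linarith) (by linarith) (neg_nonpos.2 hβ)
  rw [norm_of_nonneg (rpow_nonneg hx0.le _), norm_of_nonneg (rpow_nonneg (by linarith) _)]
  calc x ^ (-β) = 2 ^ β * (2 ^ (-β) * x ^ (-β)) := by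
        rw [← mul_assoc, ← rpow_add two_pos, add_neg_cancel, rpow_zero, one_mul]
    _ ≤ 2 ^ β * (x + 1) ^ (-β) := mul_le_mul_of_nonneg_left hle (rpow_nonneg zero_le_two _)

end PowerAsymptotics

theorem stmt13_general {Ω : Type*} [MeasurableSpace Ω] (μ : Measure Ω) [IsProbabilityMeasure μ]
    (T X : Ω → ℝ) (hTmeas : Measurable T) (hXmeas : Measurable X)
    (hT0 : ∀ ω, 0 ≤ T ω) (hX0 : ∀ ω, 0 ≤ X ω)
    (α : ℝ) (hα0 : 0 < α) (hα1 : α < 1)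
    (hTtail : Tendsto (fun x => tailP μ T x / x ^ (-α)) atTop (nhds 1))
    (β : ℝ) (hβ1 : 1 < β) (hβ2 : β < α + 1)
    (hXtail : ∀ x ≥ (0 : ℝ), tailP μ X x = (x + 1) ^ (-β)) :
    (∀ r : ℝ, 1 ≤ r → r < β → Integrable (fun ω => X ω ^ r) μ) ∧
    ¬ Integrable T μ ∧
    ((fun x => ∫ ω in {ω | T ω ≤ x}, T ω ∂μ) =O[atTop] fun x => x * tailP μ T x) ∧
    ¬ ((fun x => x * tailP μ X x) =o[atTop] fun x => tailP μ T x) := by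
  have hT : tailP μ T ~[atTop] fun x => x ^ (-α) := isEquivalent_of_tendsto_one hTtail
  have hX : tailP μ X =O[atTop] fun x => x ^ (-β) := by
    refine IsBigO.of_bound 1 ?_
    filter_upwards [eventually_gt_atTop 0] with x hx
    rw [hXtail x hx.le, one_mul, norm_of_nonneg (rpow_nonneg (by linarith) _),
      norm_of_nonneg (rpow_nonneg hx.le _)]
    exact rpow_le_rpow_of_nonpos hx (by linarith) (by linarith)
  refine ⟨fun r hr1 hrβ => integrable_rpow_of_tailP_isBigO (ae_of_all _ hX0) hXmeas.aemeasurable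
      (by linarith) hrβ hX,
    not_integrable_of_rpow_isBigO_tailP hα1.le (ae_of_all _ hT0) hT.isBigO_symm, ?_, ?_⟩
  · have hxT : (fun x => x ^ (1 - α)) =O[atTop] fun x => x * tailP μ T x :=
      (mul_rpow_neg_eventuallyEq α).symm.trans_isBigO ((isBigO_refl _ _).mul hT.isBigO_symm)
    exact (truncMean_isBigO_rpow hT0 hTmeas hα0.le hα1 hT.isBigO).trans hxT
  · intro ho
    have hXeq : (fun x => x * tailP μ X x) =ᶠ[atTop] fun x => x * (x + 1) ^ (-β) := by
      filter_upwards [eventually_ge_atTop 0] with x hx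
      rw [hXtail x hx]
    have hxX : (fun x => x ^ (1 - β)) =O[atTop] fun x => x * tailP μ X x :=
      (rpow_isBigO_mul_add_one_rpow (by linarith)).trans_eventuallyEq hXeq.symm
    exact not_rpow_isLittleO_rpow (show -α < 1 - β by linarith)
      ((hxX.trans_isLittleO ho).trans_isBigO hT.isBigO)

/-- Counterexample record: if `T ∈ 𝓒` with `P(T > x) ∼ x^{-α}` for some `0 < α < 1`, and
`X ≥ 0` with `P(X > x) = (x+1)^{-β}` for some `1 < β < α + 1`, then `E[X^r] < ∞` for all
`1 ≤ r < β`, `E[T] = ∞`, and `E[T · 1(T ≤ x)] = O(x P(T > x))`, while it is NOT the case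
that `x P(X > x) = o(P(T > x))`. -/
theorem stmt13 {Ω : Type*} [MeasurableSpace Ω] (μ : Measure Ω) [IsProbabilityMeasure μ]
    (T X : Ω → ℝ) (hTmeas : Measurable T) (hXmeas : Measurable X)
    (hT0 : ∀ ω, 0 ≤ T ω) (hX0 : ∀ ω, 0 ≤ X ω)
    (α : ℝ) (hα0 : 0 < α) (hα1 : α < 1)
    (hTC : ConsistentVar μ T)
    (hTtail : Tendsto (fun x => tailP μ T x / x ^ (-α)) atTop (nhds 1))
    (β : ℝ) (hβ1 : 1 < β) (hβ2 : β < α + 1)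
    (hXtail : ∀ x ≥ (0 : ℝ), tailP μ X x = (x + 1) ^ (-β)) :
    (∀ r : ℝ, 1 ≤ r → r < β → Integrable (fun ω => X ω ^ r) μ) ∧
    ¬ Integrable T μ ∧
    ((fun x => ∫ ω in {ω | T ω ≤ x}, T ω ∂μ) =O[atTop] fun x => x * tailP μ T x) ∧
    ¬ ((fun x => x * tailP μ X x) =o[atTop] fun x => tailP μ T x) :=
  stmt13_general μ T X hTmeas hXmeas hT0 hX0 α hα0 hα1 hTtail β hβ1 hβ2 hXtail
end
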